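/- Let λ be a nontrivial additive character of F_q. Then ∑_{X ∈ GL_n(F_q)} λ(tr X) = N_0 - N_1, where N_0 (resp. N_1) is the number of invertible n×n matrices over F_q with trace 0 (resp. trace 1). Combined with the value of the Gauss sum, this gives N_0 - N_1 = (-1)^n · q^{n(n-1)/2}. -/

import Mathlib

open Matrix Finset

section Helpers

variable {F : Type} [Field F] [Fintype F] [DecidableEq F]

/-- Sum of a nontrivial additive character over the whole group vanishes. -/
lemma myAux_sum_lam (lam : AddChar F ℂ) (hlam : lam ≠ 1) : ∑ x : F, lam x = 0 := by
  obtain ⟨a, ha⟩ := AddChar.ne_one_iff.mp hlam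
  have key : (∑ x : F, lam x) * lam a = ∑ x : F, lam x := by
    rw [Finset.sum_mul]
    simp_rw [← AddChar.map_add_eq_mul]
    exact Equiv.sum_comp (Equiv.addRight a) lam
  rcases eq_or_ne (∑ x : F, lam x) 0 with h | h
  · exact h
  · exact absurd (mul_left_cancel₀ h (key.trans (mul_one _).symm)) ha

/-- Sum of a nontrivial additive character composed with a nonzero linear form vanishes. -/
lemma myAux_sum_lam_dot (lam : AddChar F ℂ) (hlam : lam ≠ 1) {n : ℕ} (w : Fin n → F)
    (hw : w ≠ 0) : ∑ v : Fin n → F, lam (∑ i, w i * v i) = 0 := by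
  obtain ⟨a, ha⟩ := AddChar.ne_one_iff.mp hlam
  obtain ⟨i₀, hi₀⟩ := Function.ne_iff.mp hw
  simp only [Pi.zero_apply] at hi₀
  set t : Fin n → F := Pi.single i₀ (a / w i₀) with ht_def
  have ht : ∑ i, w i * t i = a := by
    simp only [ht_def, Pi.single_apply, mul_ite, mul_zero]
    rw [Finset.sum_ite_eq' Finset.univ i₀ (fun i => w i * (a / w i₀))]
    simp [mul_div_cancel₀ _ hi₀]
  have key : (∑ v : Fin n → F, lam (∑ i, w i * v i)) * lam a
      = ∑ v : Fin n → F, lam (∑ i, w i * v i) := by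
    rw [Finset.sum_mul]
    have step : ∀ v : Fin n → F,
        lam (∑ i, w i * v i) * lam a = lam (∑ i, w i * (v + t) i) := by
      intro v
      rw [← AddChar.map_add_eq_mul]
      congr 1
      simp [mul_add, Finset.sum_add_distrib, ht]
    simp_rw [step]
    exact Equiv.sum_comp (Equiv.addRight t) (fun v => lam (∑ i, w i * v i))
  rcases eq_or_ne (∑ v : Fin n → F, lam (∑ i, w i * v i)) 0 with h | h
  · exact h
  · exact absurd (mul_left_cancel₀ h (key.trans (mul_one _).symm)) ha

/-- The equivalence between scalars and 1×1 matrices. -/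
def myAux_oneByOne (F : Type) : F ≃ Matrix (Fin 1) (Fin 1) F where
  toFun x := Matrix.of fun _ _ => x
  invFun M := M 0 0
  left_inv x := rfl
  right_inv M := by
    ext i j
    fin_cases i; fin_cases j; rfl

/-- The equivalence between vectors and column matrices. -/
def myAux_colEquiv (F : Type) (n : ℕ) : (Fin n → F) ≃ Matrix (Fin n) (Fin 1) F where
  toFun v := Matrix.of fun i _ => v i
  invFun M i := M i 0
  left_inv v := rfl
  right_inv M := by
    ext i j
    fin_cases j; rfl

/-- Equivalence between block data and matrices over a sum type. -/
def myAux_blocksEquiv (F : Type) (n m : ℕ) :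
    (Matrix (Fin n) (Fin n) F × Matrix (Fin n) (Fin m) F) ×
      (Matrix (Fin m) (Fin n) F × Matrix (Fin m) (Fin m) F)
      ≃ Matrix (Fin n ⊕ Fin m) (Fin n ⊕ Fin m) F where
  toFun p := Matrix.fromBlocks p.1.1 p.1.2 p.2.1 p.2.2
  invFun M := ((M.toBlocks₁₁, M.toBlocks₁₂), (M.toBlocks₂₁, M.toBlocks₂₂))
  left_inv p := by
    obtain ⟨⟨A, B⟩, ⟨C, D⟩⟩ := p
    simp [Matrix.toBlocks_fromBlocks₁₁, Matrix.toBlocks_fromBlocks₁₂,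
      Matrix.toBlocks_fromBlocks₂₁, Matrix.toBlocks_fromBlocks₂₂]
  right_inv M := Matrix.fromBlocks_toBlocks M

lemma myAux_trace_fromBlocks {R : Type*} [AddCommMonoid R] {n m : ℕ}
    (A : Matrix (Fin n) (Fin n) R) (B : Matrix (Fin n) (Fin m) R)
    (C : Matrix (Fin m) (Fin n) R) (D : Matrix (Fin m) (Fin m) R) :
    (Matrix.fromBlocks A B C D).trace = A.trace + D.trace := by
  simp [Matrix.trace, Fintype.sum_sum_type, Matrix.diag]

lemma myAux_trace_reindex {R : Type*} [AddCommMonoid R] {α β : Type*} [Fintype α] [Fintype β]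
    (e : α ≃ β) (M : Matrix α α R) : (Matrix.reindex e e M).trace = M.trace := by
  simp only [Matrix.trace, Matrix.reindex_apply, Matrix.diag, Matrix.submatrix_apply]
  exact Equiv.sum_comp e.symm (fun j => M j j)

/-- Row operation invariance of the determinant of a block matrix. -/
lemma myAux_det_shift {F : Type} [Field F] [Fintype F] [DecidableEq F] {n : ℕ}
    (A : Matrix (Fin n) (Fin n) F) (b : Matrix (Fin n) (Fin 1) F)
    (c : Matrix (Fin 1) (Fin n) F) (d : Matrix (Fin 1) (Fin 1) F)
    (Y : Matrix (Fin 1) (Fin n) F) (hY : Y * A = 0) :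
    (Matrix.fromBlocks A b c (Y * b + d)).det = (Matrix.fromBlocks A b c d).det := by
  have h : Matrix.fromBlocks (1 : Matrix (Fin n) (Fin n) F) 0 Y 1 *
      Matrix.fromBlocks A b c d = Matrix.fromBlocks A b c (Y * b + d) := by
    rw [Matrix.fromBlocks_multiply]
    simp [hY]
  rw [← h, Matrix.det_mul, Matrix.det_fromBlocks_zero₁₂]
  simp

/-- The key induction: the Gauss sum over invertible matrices. -/
lemma myAux_key (lam : AddChar F ℂ) (hlam : lam ≠ 1) (n : ℕ) :
    ∑ M : Matrix (Fin n) (Fin n) F, (if M.det ≠ 0 then lam M.trace else 0)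
      = (-1 : ℂ) ^ n * (Fintype.card F : ℂ) ^ (n * (n - 1) / 2) := by
  induction n with
  | zero =>
      simp [Matrix.det_fin_zero, Matrix.trace_fin_zero]
      exact Fintype.card_eq_one_iff.mpr ⟨0, fun M => Matrix.ext fun i => Fin.elim0 i⟩
  | succ n ih =>
      classical
      set q : ℂ := (Fintype.card F : ℂ) with hq
      -- Step 1 : reindex to a sum type
      have e : Fin n ⊕ Fin 1 ≃ Fin (n + 1) := finSumFinEquiv
      have step1 : (∑ M : Matrix (Fin (n+1)) (Fin (n+1)) F,
            (if M.det ≠ 0 then lam M.trace else 0))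
          = ∑ N : Matrix (Fin n ⊕ Fin 1) (Fin n ⊕ Fin 1) F,
            (if N.det ≠ 0 then lam N.trace else 0) := by
        refine (Fintype.sum_equiv (Matrix.reindex e e) _ _ ?_).symm
        intro N
        rw [Matrix.det_reindex_self, myAux_trace_reindex]
      -- Step 2 : blocks
      have step2 : (∑ N : Matrix (Fin n ⊕ Fin 1) (Fin n ⊕ Fin 1) F,
            (if N.det ≠ 0 then lam N.trace else 0))
          = ∑ A : Matrix (Fin n) (Fin n) F, ∑ b : Matrix (Fin n) (Fin 1) F,
              ∑ c : Matrix (Fin 1) (Fin n) F, ∑ d : Matrix (Fin 1) (Fin 1) F,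
              (if (Matrix.fromBlocks A b c d).det ≠ 0
                then lam (A.trace + d.trace) else 0) := by
        rw [← Fintype.sum_equiv (myAux_blocksEquiv F n 1)
          (fun p => if (Matrix.fromBlocks p.1.1 p.1.2 p.2.1 p.2.2).det ≠ 0
            then lam (p.1.1.trace + p.2.2.trace) else 0)
          (fun N => if N.det ≠ 0 then lam N.trace else 0)
          (fun p => by
            simp only [myAux_blocksEquiv, Equiv.coe_fn_mk, myAux_trace_fromBlocks])]
        simp only [Fintype.sum_prod_type]
      -- the inner sum for singular A vanishes
      have singular : ∀ A : Matrix (Fin n) (Fin n) F, A.det = 0 →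
          (∑ b : Matrix (Fin n) (Fin 1) F, ∑ c : Matrix (Fin 1) (Fin n) F,
            ∑ d : Matrix (Fin 1) (Fin 1) F,
            (if (Matrix.fromBlocks A b c d).det ≠ 0
              then lam (A.trace + d.trace) else 0)) = 0 := by
        intro A hA
        obtain ⟨y, hy0, hyA⟩ := Matrix.exists_vecMul_eq_zero_iff.mpr hA
        have hyA' : ∀ j, ∑ i, y i * A i j = 0 := by
          intro j
          have := congrFun hyA j
          simpa [Matrix.vecMul, dotProduct] using this
        refine Finset.sum_eq_zero fun b _ => ?_
        by_cases hb : ∃ z : Fin n → F, z ᵥ* A = 0 ∧ ∑ i, z i * b i 0 ≠ 0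
        · obtain ⟨z, hzA, hzb⟩ := hb
          have hzA' : ∀ j, ∑ i, z i * A i j = 0 := by
            intro j
            have := congrFun hzA j
            simpa [Matrix.vecMul, dotProduct] using this
          obtain ⟨a, ha⟩ := AddChar.ne_one_iff.mp hlam
          set s : F := ∑ i, z i * b i 0 with hs
          set Y : Matrix (Fin 1) (Fin n) F := Matrix.of fun _ j => (a / s) * z j with hY
          have hYA : Y * A = 0 := by
            ext i j
            simp only [Matrix.mul_apply, hY, Matrix.of_apply, Matrix.zero_apply, mul_assoc]
            rw [← Finset.mul_sum, hzA' j, mul_zero]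
          have hYb : ∀ i j, (Y * b) i j = a := by
            intro i j
            have hj : j = 0 := Subsingleton.elim j 0
            subst hj
            simp only [Matrix.mul_apply, hY, Matrix.of_apply, mul_assoc]
            rw [← Finset.mul_sum, ← hs, div_mul_cancel₀ a hzb]
          set T : ℂ := ∑ c : Matrix (Fin 1) (Fin n) F, ∑ d : Matrix (Fin 1) (Fin 1) F,
            (if (Matrix.fromBlocks A b c d).det ≠ 0
              then lam (A.trace + d.trace) else 0) with hT
          have key : lam a * T = T := by
            rw [hT, Finset.mul_sum]
            refine Finset.sum_congr rfl fun c _ => ?_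
            rw [Finset.mul_sum]
            rw [← Equiv.sum_comp (Equiv.addLeft (Y * b))
              (fun d => if (Matrix.fromBlocks A b c d).det ≠ 0
                then lam (A.trace + d.trace) else 0)]
            refine Finset.sum_congr rfl fun d _ => ?_
            simp only [Equiv.coe_addLeft]
            simp only [myAux_det_shift A b c d Y hYA]
            by_cases h : (Matrix.fromBlocks A b c d).det ≠ 0
            · simp only [h, if_true, if_pos h]
              rw [← AddChar.map_add_eq_mul]
              congr 1
              have : (Y * b + d).trace = a + d.trace := by
                rw [Matrix.trace_add]
                congr 1
                rw [Matrix.trace_fin_one, hYb 0 0]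
              rw [this]
              ring
            · simp [h]
          have haT : (lam a - 1) * T = 0 := by
            rw [sub_mul, key, one_mul, sub_self]
          rcases mul_eq_zero.mp haT with h | h
          · exact absurd (sub_eq_zero.mp h) ha
          · exact h
        · push_neg at hb
          refine Finset.sum_eq_zero fun c _ => Finset.sum_eq_zero fun d _ => ?_
          have hdet : (Matrix.fromBlocks A b c d).det = 0 := by
            rw [← Matrix.exists_vecMul_eq_zero_iff]
            refine ⟨Sum.elim y 0, ?_, ?_⟩
            · intro h
              apply hy0
              funext i
              exact congrFun h (Sum.inl i)
            · funext k
              cases k with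
              | inl j =>
                  simp only [Matrix.vecMul, dotProduct, Fintype.sum_sum_type,
                    Matrix.fromBlocks, Matrix.of_apply, Sum.elim_inl, Sum.elim_inr,
                    Pi.zero_apply, zero_mul, Finset.sum_const_zero, add_zero]
                  exact hyA' j
              | inr j =>
                  have hj : j = 0 := Subsingleton.elim j 0
                  subst hj
                  simp only [Matrix.vecMul, dotProduct, Fintype.sum_sum_type,
                    Matrix.fromBlocks, Matrix.of_apply, Sum.elim_inl, Sum.elim_inr,
                    Pi.zero_apply, zero_mul, Finset.sum_const_zero, add_zero]
                  exact hb y hyA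
          simp [hdet]
      -- the inner sum for invertible A
      have invertibleCase : ∀ A : Matrix (Fin n) (Fin n) F, A.det ≠ 0 →
          (∑ b : Matrix (Fin n) (Fin 1) F, ∑ c : Matrix (Fin 1) (Fin n) F,
            ∑ d : Matrix (Fin 1) (Fin 1) F,
            (if (Matrix.fromBlocks A b c d).det ≠ 0
              then lam (A.trace + d.trace) else 0)) = -(q ^ n) * lam A.trace := by
        intro A hA
        have hAu : IsUnit A.det := isUnit_iff_ne_zero.mpr hA
        letI : Invertible A := A.invertibleOfIsUnitDet hAu
        have stepa : ∀ b c, (∑ d : Matrix (Fin 1) (Fin 1) F,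
            (if (Matrix.fromBlocks A b c d).det ≠ 0
              then lam (A.trace + d.trace) else 0))
            = -lam (A.trace + (c * ⅟A * b) 0 0) := by
          intro b c
          rw [← Equiv.sum_comp (myAux_oneByOne F)
            (fun d => if (Matrix.fromBlocks A b c d).det ≠ 0
              then lam (A.trace + d.trace) else 0)]
          set s : F := (c * ⅟A * b) 0 0 with hs
          have hcond : ∀ x : F,
              ((Matrix.fromBlocks A b c (myAux_oneByOne F x)).det ≠ 0) ↔ x ≠ s := by
            intro x
            rw [Matrix.det_fromBlocks₁₁, mul_ne_zero_iff]
            have hd : (myAux_oneByOne F x - c * ⅟A * b).det = x - s := by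
              rw [Matrix.det_fin_one]
              simp [myAux_oneByOne, hs, Matrix.sub_apply]
              rfl
            rw [hd]
            constructor
            · exact fun h => sub_ne_zero.mp h.2
            · exact fun h => ⟨hA, sub_ne_zero.mpr h⟩
          have htr : ∀ x : F, (myAux_oneByOne F x).trace = x := by
            intro x
            rw [Matrix.trace_fin_one]
            rfl
          calc (∑ x : F, if (Matrix.fromBlocks A b c (myAux_oneByOne F x)).det ≠ 0
                  then lam (A.trace + (myAux_oneByOne F x).trace) else 0)
              = ∑ x : F, (if x = s then 0 else lam (A.trace + x)) := by
                refine Finset.sum_congr rfl fun x _ => ?_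
                rw [htr x]
                by_cases h : x = s
                · rw [if_neg (by simp [hcond, h]), if_pos h]
                · rw [if_pos ((hcond x).mpr h), if_neg h]
            _ = (∑ x : F, lam (A.trace + x))
                  - ∑ x : F, (if x = s then lam (A.trace + x) else 0) := by
                rw [← Finset.sum_sub_distrib]
                refine Finset.sum_congr rfl fun x _ => ?_
                by_cases h : x = s <;> simp [h]
            _ = -lam (A.trace + s) := by
                have h1 : ∑ x : F, lam (A.trace + x) = 0 := by
                  simp_rw [AddChar.map_add_eq_mul]
                  rw [← Finset.mul_sum, myAux_sum_lam lam hlam, mul_zero]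
                rw [h1, Finset.sum_ite_eq' Finset.univ s (fun x => lam (A.trace + x))]
                simp
        have stepb : ∀ c : Matrix (Fin 1) (Fin n) F,
            (∑ b : Matrix (Fin n) (Fin 1) F, lam (A.trace + (c * ⅟A * b) 0 0))
            = if c = 0 then lam A.trace * q ^ n else 0 := by
          intro c
          rw [← Equiv.sum_comp (myAux_colEquiv F n)
            (fun b => lam (A.trace + (c * ⅟A * b) 0 0))]
          set w : Fin n → F := fun j => (c * ⅟A) 0 j with hw
          have hsv : ∀ v : Fin n → F,
              (c * ⅟A * myAux_colEquiv F n v) 0 0 = ∑ j, w j * v j := by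
            intro v
            rw [Matrix.mul_apply]
            rfl
          by_cases hc : c = 0
          · subst hc
            have : w = 0 := by
              funext j
              simp [hw, Matrix.zero_mul]
            simp_rw [hsv, this]
            simp only [Pi.zero_apply, zero_mul, Finset.sum_const_zero, add_zero,
              if_pos rfl]
            rw [Finset.sum_const, Finset.card_univ, nsmul_eq_mul,
              Fintype.card_fun, Fintype.card_fin]
            simp only [hq]
            push_cast
            ring
          · have hwne : w ≠ 0 := by
              intro h
              apply hc
              have hcA : c * ⅟A = 0 := by
                ext i j
                have hi : i = 0 := Subsingleton.elim i 0
                subst hi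
                exact congrFun h j
              have hassoc : c * ⅟A * A = c := by
                rw [Matrix.mul_assoc, invOf_mul_self, Matrix.mul_one]
              rw [← hassoc, hcA, Matrix.zero_mul]
            simp_rw [hsv, AddChar.map_add_eq_mul]
            rw [← Finset.mul_sum, myAux_sum_lam_dot lam hlam w hwne, mul_zero,
              if_neg hc]
        have : (∑ b : Matrix (Fin n) (Fin 1) F, ∑ c : Matrix (Fin 1) (Fin n) F,
            ∑ d : Matrix (Fin 1) (Fin 1) F,
            (if (Matrix.fromBlocks A b c d).det ≠ 0
              then lam (A.trace + d.trace) else 0))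
            = ∑ c : Matrix (Fin 1) (Fin n) F, ∑ b : Matrix (Fin n) (Fin 1) F,
              -lam (A.trace + (c * ⅟A * b) 0 0) := by
          rw [Finset.sum_comm]
          exact Finset.sum_congr rfl fun c _ => Finset.sum_congr rfl fun b _ => stepa b c
        rw [this]
        have : ∀ c : Matrix (Fin 1) (Fin n) F,
            (∑ b : Matrix (Fin n) (Fin 1) F, -lam (A.trace + (c * ⅟A * b) 0 0))
            = -(if c = 0 then lam A.trace * q ^ n else 0) := by
          intro c
          rw [← stepb c, ← Finset.sum_neg_distrib]
        simp_rw [this]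
        rw [Finset.sum_neg_distrib,
          Finset.sum_ite_eq' Finset.univ (0 : Matrix (Fin 1) (Fin n) F)
            (fun _ => lam A.trace * q ^ n)]
        simp only [Finset.mem_univ, if_true]
        ring
      -- put everything together
      rw [step1, step2]
      have : (∑ A : Matrix (Fin n) (Fin n) F, ∑ b : Matrix (Fin n) (Fin 1) F,
          ∑ c : Matrix (Fin 1) (Fin n) F, ∑ d : Matrix (Fin 1) (Fin 1) F,
          (if (Matrix.fromBlocks A b c d).det ≠ 0
            then lam (A.trace + d.trace) else 0))
          = ∑ A : Matrix (Fin n) (Fin n) F,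
            (-(q ^ n)) * (if A.det ≠ 0 then lam A.trace else 0) := by
        refine Finset.sum_congr rfl fun A _ => ?_
        by_cases hA : A.det = 0
        · rw [singular A hA]
          simp [hA]
        · rw [invertibleCase A hA, if_pos hA]
      rw [this, ← Finset.mul_sum, ih]
      have hexp : n * (n - 1) / 2 + n = (n + 1) * (n + 1 - 1) / 2 := by
        cases n with
        | zero => rfl
        | succ m =>
            have h1 : (m + 1 + 1) * (m + 1 + 1 - 1) = (m + 1) * (m + 1 - 1) + 2 * (m + 1) := by
              simp only [Nat.add_sub_cancel]
              ring
            rw [h1, Nat.add_mul_div_left _ _ (by norm_num : 0 < 2)]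
      rw [← hexp]
      rw [pow_add, pow_succ]
      ring

/-- Sum over GL equals the det-restricted sum over all matrices. -/
lemma myAux_gl_sum {n : ℕ} (f : Matrix (Fin n) (Fin n) F → ℂ) :
    ∑ X : GL (Fin n) F, f (X : Matrix (Fin n) (Fin n) F)
      = ∑ M : Matrix (Fin n) (Fin n) F, (if M.det ≠ 0 then f M else 0) := by
  classical
  have hfil : ∑ M ∈ Finset.univ.filter (fun M : Matrix (Fin n) (Fin n) F => M.det ≠ 0), f M
      = ∑ M : Matrix (Fin n) (Fin n) F, (if M.det ≠ 0 then f M else 0) :=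
    Finset.sum_filter _ _
  rw [← hfil]
  refine Finset.sum_bij (fun (X : GL (Fin n) F) _ => (X : Matrix (Fin n) (Fin n) F))
    ?_ ?_ ?_ ?_
  · intro X _
    simp only [Finset.mem_filter, Finset.mem_univ, true_and]
    intro h
    have : IsUnit (X : Matrix (Fin n) (Fin n) F).det :=
      (Matrix.isUnit_iff_isUnit_det _).mp (Units.isUnit X)
    exact (isUnit_iff_ne_zero.mp this) h
  · intro X _ Y _ h
    exact Units.ext h
  · intro M hM
    simp only [Finset.mem_filter, Finset.mem_univ, true_and] at hM
    have : IsUnit M := (Matrix.isUnit_iff_isUnit_det M).mpr (isUnit_iff_ne_zero.mpr hM)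
    obtain ⟨u, hu⟩ := this
    exact ⟨u, Finset.mem_univ u, hu⟩
  · intro X _
    rfl

end Helpers

theorem gauss_sum_GL_trivial_char_eq_N0_sub_N1 {n : ℕ} {F : Type} [Field F] [Fintype F]
    [DecidableEq F] (lam : AddChar F ℂ) (hlam : lam ≠ 1) :
    ∑ X : GL (Fin n) F, lam ((X : Matrix (Fin n) (Fin n) F).trace) =
      ((Finset.univ.filter
          (fun X : GL (Fin n) F =>
            (X : Matrix (Fin n) (Fin n) F).trace = (0 : F))).card : ℂ) -
        ((Finset.univ.filter
          (fun X : GL (Fin n) F =>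
            (X : Matrix (Fin n) (Fin n) F).trace = (1 : F))).card : ℂ) ∧
    ((Finset.univ.filter
        (fun X : GL (Fin n) F =>
          (X : Matrix (Fin n) (Fin n) F).trace = (0 : F))).card : ℂ) -
      ((Finset.univ.filter
        (fun X : GL (Fin n) F =>
          (X : Matrix (Fin n) (Fin n) F).trace = (1 : F))).card : ℂ) =
      (-1 : ℂ) ^ n * (Fintype.card F : ℂ) ^ (n * (n - 1) / 2) := by
  classical
  set Nt : F → ℕ := fun t => (Finset.univ.filter
    (fun X : GL (Fin n) F => (X : Matrix (Fin n) (Fin n) F).trace = t)).card with hNt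
  -- the scaling bijection
  have hscale : ∀ t : F, t ≠ 0 → Nt t = Nt 1 := by
    intro t ht
    have hu1 : (t • (1 : Matrix (Fin n) (Fin n) F)) * (t⁻¹ • 1) = 1 := by
      rw [Matrix.smul_mul, Matrix.mul_smul, smul_smul, Matrix.mul_one,
        mul_inv_cancel₀ ht, one_smul]
    have hu2 : (t⁻¹ • (1 : Matrix (Fin n) (Fin n) F)) * (t • 1) = 1 := by
      rw [Matrix.smul_mul, Matrix.mul_smul, smul_smul, Matrix.mul_one,
        inv_mul_cancel₀ ht, one_smul]
    set u : GL (Fin n) F := ⟨t • 1, t⁻¹ • 1, hu1, hu2⟩ with hu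
    have hcoeinv : ((u⁻¹ : GL (Fin n) F) : Matrix (Fin n) (Fin n) F) = t⁻¹ • 1 := rfl
    have hcoe : ((u : GL (Fin n) F) : Matrix (Fin n) (Fin n) F) = t • 1 := rfl
    have htrinv : ∀ X : GL (Fin n) F, ((u⁻¹ * X : GL (Fin n) F) : Matrix (Fin n) (Fin n) F).trace
        = t⁻¹ * (X : Matrix (Fin n) (Fin n) F).trace := by
      intro X
      have : ((u⁻¹ * X : GL (Fin n) F) : Matrix (Fin n) (Fin n) F)
          = t⁻¹ • (X : Matrix (Fin n) (Fin n) F) := by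
        show ((u⁻¹ : GL (Fin n) F) : Matrix (Fin n) (Fin n) F) * _ = _
        rw [hcoeinv, Matrix.smul_mul, Matrix.one_mul]
      rw [this, Matrix.trace_smul, smul_eq_mul]
    have htru : ∀ X : GL (Fin n) F, ((u * X : GL (Fin n) F) : Matrix (Fin n) (Fin n) F).trace
        = t * (X : Matrix (Fin n) (Fin n) F).trace := by
      intro X
      have : ((u * X : GL (Fin n) F) : Matrix (Fin n) (Fin n) F)
          = t • (X : Matrix (Fin n) (Fin n) F) := by
        show ((u : GL (Fin n) F) : Matrix (Fin n) (Fin n) F) * _ = _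
        rw [hcoe, Matrix.smul_mul, Matrix.one_mul]
      rw [this, Matrix.trace_smul, smul_eq_mul]
    refine Finset.card_bij' (fun X _ => u⁻¹ * X) (fun X _ => u * X) ?_ ?_ ?_ ?_
    · intro X hX
      simp only [Finset.mem_filter, Finset.mem_univ, true_and] at hX ⊢
      rw [htrinv X, hX, inv_mul_cancel₀ ht]
    · intro X hX
      simp only [Finset.mem_filter, Finset.mem_univ, true_and] at hX ⊢
      rw [htru X, hX, mul_one]
    · intro X _
      show u * (u⁻¹ * X) = X
      rw [← mul_assoc, mul_inv_cancel, one_mul]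
    · intro X _
      show u⁻¹ * (u * X) = X
      rw [← mul_assoc, inv_mul_cancel, one_mul]
  -- fiberwise decomposition
  have hfib : ∑ X : GL (Fin n) F, lam ((X : Matrix (Fin n) (Fin n) F).trace)
      = ∑ t : F, (Nt t : ℂ) * lam t := by
    rw [← Finset.sum_fiberwise Finset.univ
      (fun X : GL (Fin n) F => (X : Matrix (Fin n) (Fin n) F).trace)
      (fun X : GL (Fin n) F => lam ((X : Matrix (Fin n) (Fin n) F).trace))]
    refine Finset.sum_congr rfl fun t _ => ?_
    have : ∀ X ∈ Finset.univ.filter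
        (fun X : GL (Fin n) F => (X : Matrix (Fin n) (Fin n) F).trace = t),
        lam ((X : Matrix (Fin n) (Fin n) F).trace) = lam t := by
      intro X hX
      rw [(Finset.mem_filter.mp hX).2]
    rw [Finset.sum_congr rfl this, Finset.sum_const, nsmul_eq_mul]
  have hsum0 : ∑ t : F, lam t = 0 := myAux_sum_lam lam hlam
  have part1 : ∑ X : GL (Fin n) F, lam ((X : Matrix (Fin n) (Fin n) F).trace)
      = (Nt 0 : ℂ) - (Nt 1 : ℂ) := by
    rw [hfib, ← Finset.add_sum_erase Finset.univ _ (Finset.mem_univ (0 : F))]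
    have herase : ∑ t ∈ Finset.univ.erase (0 : F), (Nt t : ℂ) * lam t
        = (Nt 1 : ℂ) * ∑ t ∈ Finset.univ.erase (0 : F), lam t := by
      rw [Finset.mul_sum]
      refine Finset.sum_congr rfl fun t ht => ?_
      rw [hscale t (Finset.mem_erase.mp ht).1]
    rw [herase, Finset.sum_erase_eq_sub (Finset.mem_univ (0 : F)), hsum0]
    have h0 : lam (0 : F) = 1 := AddChar.map_zero_eq_one lam
    rw [h0]
    ring
  have part2 : ∑ X : GL (Fin n) F, lam ((X : Matrix (Fin n) (Fin n) F).trace)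
      = (-1 : ℂ) ^ n * (Fintype.card F : ℂ) ^ (n * (n - 1) / 2) := by
    rw [myAux_gl_sum (fun M => lam M.trace)]
    exact myAux_key lam hlam n
  exact ⟨part1, part1.symm.trans part2⟩
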